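/- arXiv:2605.27828 — 3 statements merged into one kernel-verified Lean document; each statement's English description precedes it below -/
import Mathlib

section
/- Let R_n be the sprout sequence with seed F(t) having log F(t) = ∑_{n≥1} b_n t^n/n. Then the coefficient of h_n in the h-basis expansion of R_n equals b_n. -/
/- Symmetric functions in infinitely many variables `x₁, x₂, …` are modelled as
elements of `MvPowerSeries ℕ K`. A sprout sequence with seed
`F(t) = ∑ aₙ tⁿ` (`a₀ = 1`) is defined by `∑ₙ Rₙ tⁿ = ∏ᵢ F(xᵢ t)`; since `Rₙ` is
homogeneous of degree `n`, the variable `t` is recorded by the total degree, and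
the product `∏ᵢ F(xᵢ t)` is the power series whose coefficient on the monomial
`∏ᵢ xᵢ^{dᵢ}` is `∏ᵢ a_{dᵢ}`. -/

open Finset

noncomputable section

variable {K : Type*} [Field K] [CharZero K]

/-- Total degree of a monomial exponent vector. -/
def mdeg (d : ℕ →₀ ℕ) : ℕ := d.sum fun _ k => k

/-- The infinite product `∏_{i≥1} F(x_i t)` where `F(t) = ∑ aₙ tⁿ`: the
coefficient of `∏ xᵢ^{dᵢ}` is `∏ a_{dᵢ}`. -/
def sproutSeries (a : ℕ → K) : MvPowerSeries ℕ K :=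
  fun d => d.prod fun _ k => a k

/-- `sproutFn a n` is `Rₙ`, the degree-`n` homogeneous component of `∏ᵢ F(xᵢ t)`,
so that `∑ₙ (sproutFn a n) tⁿ = ∏ᵢ F(xᵢ t)`. -/
def sproutFn (a : ℕ → K) (n : ℕ) : MvPowerSeries ℕ K :=
  fun d => if mdeg d = n then sproutSeries a d else 0

/-- The multiset of nonzero exponents of a monomial. -/
def typeOf (d : ℕ →₀ ℕ) : Multiset ℕ := d.support.val.map d

/-- The monomial symmetric function `m_μ` (in infinitely many variables). -/
def msym (K : Type*) [Field K] (μ : Multiset ℕ) : MvPowerSeries ℕ K :=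
  fun d => if typeOf d = μ then 1 else 0

/-- The power sum symmetric function `p_k`. -/
def psym (K : Type*) [Field K] (k : ℕ) : MvPowerSeries ℕ K := msym K {k}

/-- `p_μ = p_{μ₁} p_{μ₂} ⋯`. -/
def pprod (K : Type*) [Field K] (μ : Multiset ℕ) : MvPowerSeries ℕ K :=
  (μ.map (psym K)).prod

/-- The complete homogeneous symmetric function `h_n`. -/
def hsym (K : Type*) [Field K] (n : ℕ) : MvPowerSeries ℕ K :=
  fun d => if mdeg d = n then 1 else 0

/-- `h_μ = h_{μ₁} h_{μ₂} ⋯`. -/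
def hprod (K : Type*) [Field K] (μ : Multiset ℕ) : MvPowerSeries ℕ K :=
  (μ.map (hsym K)).prod

/-- The elementary symmetric function `e_n`. -/
def esym (K : Type*) [Field K] (n : ℕ) : MvPowerSeries ℕ K :=
  msym K (Multiset.replicate n 1)

/-- `e_μ = e_{μ₁} e_{μ₂} ⋯`. -/
def eprod (K : Type*) [Field K] (μ : Multiset ℕ) : MvPowerSeries ℕ K :=
  (μ.map (esym K)).prod

/-- `z_λ = ∏ᵢ i^{mᵢ} mᵢ!` where `λ` has `mᵢ` parts equal to `i`. -/
def zPart (μ : Multiset ℕ) : ℕ :=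
  μ.prod * (μ.dedup.map fun i => (μ.count i).factorial).prod

/-- The parts of a partition arranged in weakly decreasing order. -/
def plist (μ : Multiset ℕ) : List ℕ := (μ.sort (· ≤ ·)).reverse

/-- `h_m` for an integer index, with `h_m = 0` for `m < 0`. -/
def hsymZ (K : Type*) [Field K] (m : ℤ) : MvPowerSeries ℕ K :=
  if 0 ≤ m then hsym K m.toNat else 0

/-- The Schur function `s_λ`, via the Jacobi–Trudi determinant `det[h_{λᵢ-i+j}]`,
where `l` is the weakly decreasing list of parts of `λ`. -/
def sschur (K : Type*) [Field K] (l : List ℕ) : MvPowerSeries ℕ K :=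
  Matrix.det (Matrix.of fun i j : Fin l.length =>
    hsymZ K ((l.get i : ℤ) - (i : ℤ) + (j : ℤ)))

/-- `a_m` for an integer index, with `a_m = 0` for `m < 0`. -/
def aZ (a : ℕ → K) (m : ℤ) : K := if 0 ≤ m then a m.toNat else 0

/-- The partition `⟨1ⁿ⟩` of `n`. -/
def onePartition (n : ℕ) : Nat.Partition n :=
  ⟨Multiset.replicate n 1, by
    intro i hi
    rw [Multiset.eq_of_mem_replicate hi]
    exact Nat.one_pos, by simp [Multiset.sum_replicate]⟩

/-! Specialize `xᵢ ↦ ζⁱ t` for `i < n` and `xᵢ ↦ 0` for `i ≥ n`, where `ζ` is a primitive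
`n`-th root of unity in an algebraic closure. The image of `∏ᵢ F(xᵢ t)` is
`G(t) = ∏_{i<n} F(ζⁱ t)`, whose logarithmic derivative `t G'/G = ∑_{i<n} B(ζⁱ t)`, with
`B = t F'/F = ∑ bₖ tᵏ`, has coefficients `n bₖ` for `n ∣ k` and `0` otherwise; hence
`[tᵐ] G = 0` for `0 < m < n` and `[tⁿ] G = bₙ`. For `F = 1/(1 - t)` (all `bₖ = 1`) this says
`hⱼ(1, ζ, …, ζⁿ⁻¹) = 0` for `0 < j < n` and `hₙ(1, ζ, …, ζⁿ⁻¹) = 1`, so every `h_λ` with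
`λ ⊢ n` is sent to `0 · tⁿ` except `hₙ ↦ tⁿ`. Comparing `tⁿ`-coefficients in
`Rₙ = ∑ c_λ h_λ` gives `c_(n) = bₙ`. -/
open PowerSeries

namespace PowerSeries

variable {R : Type*} [CommRing R]

theorem coeff_X_mul_derivative (f : R⟦X⟧) (m : ℕ) :
    coeff m (X * d⁄dX R f) = m * coeff m f := by
  cases m with
  | zero => simp
  | succ m => rw [coeff_succ_X_mul, coeff_derivative, mul_comm]; push_cast; ring

theorem X_mul_derivative_mul_of_eq {F G B C : R⟦X⟧}
    (hF : X * d⁄dX R F = B * F) (hG : X * d⁄dX R G = C * G) :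
    X * d⁄dX R (F * G) = (B + C) * (F * G) := by
  rw [Derivation.leibniz, smul_eq_mul, smul_eq_mul]
  linear_combination F * hG + G * hF

theorem X_mul_derivative_prod_of_eq {ι : Type*} (s : Finset ι) {F B : ι → R⟦X⟧}
    (h : ∀ i ∈ s, X * d⁄dX R (F i) = B i * F i) :
    X * d⁄dX R (∏ i ∈ s, F i) = (∑ i ∈ s, B i) * ∏ i ∈ s, F i := by
  induction s using Finset.cons_induction with
  | empty => simp
  | cons j s hj ih =>
    rw [prod_cons, sum_cons]
    exact X_mul_derivative_mul_of_eq (h j (mem_cons_self j s))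
      (ih fun i hi => h i (mem_cons_of_mem hi))

theorem X_mul_derivative_rescale (c : R) (f : R⟦X⟧) :
    X * d⁄dX R (rescale c f) = rescale c (X * d⁄dX R f) := by
  ext m
  rw [coeff_rescale, coeff_X_mul_derivative, coeff_X_mul_derivative, coeff_rescale]
  ring

theorem X_mul_derivative_mk_of_recursion {a b : ℕ → R}
    (hb : ∀ m : ℕ, 1 ≤ m → (m : R) * a m = ∑ k ∈ Icc 1 m, b k * a (m - k)) :
    X * d⁄dX R (mk a) = mk (fun k => if k = 0 then 0 else b k) * mk a := by
  ext m
  rw [coeff_X_mul_derivative, coeff_mk, coeff_mul, Nat.sum_antidiagonal_eq_sum_range_succ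
    (fun i j => coeff i (mk fun k => if k = 0 then 0 else b k) * coeff j (mk a)),
    sum_range_succ']
  cases m with
  | zero => simp
  | succ m =>
    rw [hb (m + 1) (by omega), ← Finset.Ico_add_one_right_eq_Icc, sum_Ico_eq_sum_range]
    simp [add_comm 1]

theorem natCast_mul_coeff_of_X_mul_derivative_eq {G C : R⟦X⟧}
    (h : X * d⁄dX R G = C * G) {n : ℕ} (hC : ∀ k < n, coeff k C = 0) {m : ℕ} (hm : m ≤ n) :
    (m : R) * coeff m G = if m = n then coeff n C * coeff 0 G else 0 := by
  rw [← coeff_X_mul_derivative, h, coeff_mul, Nat.sum_antidiagonal_eq_sum_range_succ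
    (fun i j => coeff i C * coeff j G), sum_range_succ]
  rw [sum_eq_zero fun k hk => by rw [hC k (by simp at hk; omega), zero_mul], zero_add, Nat.sub_self]
  split_ifs with hmn
  · rw [hmn]
  · rw [hC m (by omega), zero_mul]

end PowerSeries

theorem IsPrimitiveRoot.sum_range_pow_mul_eq_zero {L : Type*} [CommRing L] [IsDomain L]
    {ζ : L} {n k : ℕ} (hζ : IsPrimitiveRoot ζ n) (hk0 : 0 < k) (hkn : k < n) :
    ∑ i ∈ range n, ζ ^ (i * k) = 0 := by
  have hne : ζ ^ k - 1 ≠ 0 := sub_ne_zero.mpr (hζ.pow_ne_one_of_pos_of_lt hk0.ne' hkn)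
  have hgeom := geom_sum_mul (ζ ^ k) n
  rw [← pow_mul, mul_comm k, pow_mul, hζ.pow_eq_one, one_pow, sub_self] at hgeom
  simpa only [mul_comm _ k, pow_mul] using (mul_eq_zero.mp hgeom).resolve_right hne

section PrimitiveRootProduct

variable {L : Type*} [Field L] [CharZero L] {ζ : L} {n : ℕ} {a b : ℕ → L}

theorem coeff_prod_rescale_primitiveRoot (hζ : IsPrimitiveRoot ζ n) (ha0 : a 0 = 1)
    (hb : ∀ m : ℕ, 1 ≤ m → (m : L) * a m = ∑ k ∈ Icc 1 m, b k * a (m - k))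
    {m : ℕ} (hm0 : 0 < m) (hmn : m ≤ n) :
    coeff m (∏ i ∈ range n, rescale (ζ ^ i) (mk a)) = if m = n then b n else 0 := by
  set B : L⟦X⟧ := mk fun k => if k = 0 then 0 else b k
  have hG := X_mul_derivative_prod_of_eq (range n) (F := fun i => rescale (ζ ^ i) (mk a))
    (B := fun i => rescale (ζ ^ i) B) fun i _ => by
      rw [X_mul_derivative_rescale, X_mul_derivative_mk_of_recursion hb, map_mul]
  have hC : ∀ k, coeff k (∑ i ∈ range n, rescale (ζ ^ i) B)
      = (∑ i ∈ range n, ζ ^ (i * k)) * if k = 0 then 0 else b k := by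
    intro k
    simp only [map_sum, coeff_rescale, B, coeff_mk, sum_mul, ← pow_mul]
  have hG0 : coeff 0 (∏ i ∈ range n, rescale (ζ ^ i) (mk a)) = 1 := by
    rw [coeff_zero_eq_constantCoeff_apply, map_prod]
    simp [← coeff_zero_eq_constantCoeff_apply, coeff_rescale, ha0]
  have hCn : coeff n (∑ i ∈ range n, rescale (ζ ^ i) B) = n * b n := by
    have hroot : ∀ i, ζ ^ (i * n) = 1 := fun i => by
      rw [mul_comm, pow_mul, hζ.pow_eq_one, one_pow]
    simp [hC, hroot, (hm0.trans_le hmn).ne']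
  have key := natCast_mul_coeff_of_X_mul_derivative_eq hG (n := n) (fun k hk => by
    rw [hC]
    rcases Nat.eq_zero_or_pos k with rfl | hk0
    · simp
    · rw [hζ.sum_range_pow_mul_eq_zero hk0 hk, zero_mul]) hmn
  rw [hCn, hG0, mul_one] at key
  have hm : (m : L) ≠ 0 := by exact_mod_cast hm0.ne'
  split_ifs at key ⊢ with h
  · subst h; exact mul_left_cancel₀ hm key
  · exact (mul_eq_zero.mp key).resolve_left hm

end PrimitiveRootProduct

theorem Nat.Partition.exists_mem_parts_lt_of_ne_indiscrete {n : ℕ} (hn : n ≠ 0)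
    {l : n.Partition} (hl : l ≠ indiscrete n) : ∃ j ∈ l.parts, j < n := by
  by_contra! h
  refine hl (Nat.Partition.ext ?_)
  have hcard : l.parts.card * n ≤ n := by
    simpa [l.parts_sum] using Multiset.card_nsmul_le_sum h
  have hcard_pos : 0 < l.parts.card := Multiset.card_pos.mpr fun h0 =>
    hn (by rw [← l.parts_sum, h0, Multiset.sum_zero])
  have hparts : l.parts = Multiset.replicate l.parts.card n := Multiset.eq_replicate_of_mem
    fun j hj => le_antisymm (l.parts_sum ▸ Multiset.le_sum_of_mem hj) (h j hj)
  rw [hparts, indiscrete_parts hn, (by nlinarith [Nat.pos_of_ne_zero hn] : l.parts.card = 1),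
    Multiset.replicate_one]

theorem mdeg_of_mem_finsuppAntidiag {s : Finset ℕ} {m : ℕ} {d : ℕ →₀ ℕ}
    (hd : d ∈ finsuppAntidiag s m) : mdeg d = m := by
  rw [mem_finsuppAntidiag] at hd
  rw [mdeg, Finsupp.sum, sum_subset hd.2 fun i _ hi => Finsupp.notMem_support_iff.mp hi, hd.1]

section PrincipalSpecialization

variable {F L : Type*} [Field F] [CommRing L] [Algebra F L]

def principalSubst (n : ℕ) (ζ : L) (i : ℕ) : L⟦X⟧ := if i < n then C (ζ ^ i) * X else 0

theorem hasSubst_principalSubst (n : ℕ) (ζ : L) :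
    MvPowerSeries.HasSubst (principalSubst n ζ) where
  const_coeff i := by
    have : constantCoeff (principalSubst n ζ i) = 0 := by
      unfold principalSubst
      split_ifs <;> simp
    exact this ▸ IsNilpotent.zero
  coeff_zero d := (Set.finite_Iio n).subset fun i hi => by
    by_contra h
    have hzero : principalSubst n ζ i = 0 := if_neg (by simpa using h)
    simp [hzero] at hi

theorem prod_principalSubst_pow (n : ℕ) (ζ : L) (d : ℕ →₀ ℕ) :
    (d.prod fun i e => principalSubst n ζ i ^ e) =
      if d.support ⊆ range n then C (∏ i ∈ range n, ζ ^ (i * d i)) * X ^ (∑ i ∈ range n, d i)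
      else 0 := by
  split_ifs with hd
  · rw [Finsupp.prod,
      prod_subset hd fun i _ hi => by rw [Finsupp.notMem_support_iff.mp hi, pow_zero], map_prod,
      ← prod_pow_eq_pow_sum, ← prod_mul_distrib]
    refine prod_congr rfl fun i hi => ?_
    simp only [principalSubst, if_pos (mem_range.mp hi), mul_pow, ← map_pow, pow_mul]
  · obtain ⟨i, hi, hin⟩ := not_subset.mp hd
    refine prod_eq_zero hi ?_
    simp only [principalSubst, if_neg (show ¬i < n by simpa using hin)]
    rw [zero_pow (Finsupp.mem_support_iff.mp hi)]

theorem coeff_prod_principalSubst_pow (n : ℕ) (ζ : L) (d : ℕ →₀ ℕ) (m : ℕ) :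
    coeff m (d.prod fun i e => principalSubst n ζ i ^ e) =
      if d ∈ finsuppAntidiag (range n) m then ∏ i ∈ range n, ζ ^ (i * d i) else 0 := by
  rw [prod_principalSubst_pow]
  by_cases hs : d.support ⊆ range n
  · rw [if_pos hs, coeff_C_mul_X_pow]
    exact if_congr (by simp [mem_finsuppAntidiag, hs, eq_comm]) rfl rfl
  · rw [if_neg hs, map_zero, if_neg fun h => hs (mem_finsuppAntidiag.mp h).2]

variable (F) in
def principalSpecialization (n : ℕ) (ζ : L) : MvPowerSeries ℕ F →ₐ[F] L⟦X⟧ :=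
  MvPowerSeries.substAlgHom (hasSubst_principalSubst n ζ)

theorem coeff_principalSpecialization (n : ℕ) (ζ : L) (f : MvPowerSeries ℕ F) (m : ℕ) :
    coeff m (principalSpecialization F n ζ f) = ∑ d ∈ finsuppAntidiag (range n) m,
      algebraMap F L (MvPowerSeries.coeff d f) * ∏ i ∈ range n, ζ ^ (i * d i) := by
  rw [principalSpecialization, MvPowerSeries.substAlgHom_apply, ← coeff_coeToMvPowerSeries,
    MvPowerSeries.coeff_subst (hasSubst_principalSubst n ζ)]
  simp only [coeff_coeToMvPowerSeries, coeff_prod_principalSubst_pow, Algebra.smul_def, mul_ite,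
    mul_zero]
  rw [finsum_eq_sum_of_support_subset _ (s := finsuppAntidiag (range n) m) ?_]
  · exact sum_congr rfl fun d hd => if_pos hd
  · intro d hd
    by_contra h
    exact hd (if_neg h)

variable {n : ℕ} {ζ : L}

theorem coeff_principalSpecialization_of_coeff_eq_prod {f : MvPowerSeries ℕ F} {m : ℕ}
    {a : ℕ → F} (ha0 : a 0 = 1)
    (hf : ∀ d, mdeg d = m → MvPowerSeries.coeff d f = d.prod fun _ k => a k) :
    coeff m (principalSpecialization F n ζ f) =
      coeff m (∏ i ∈ range n, rescale (ζ ^ i) (mk fun k => algebraMap F L (a k))) := by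
  rw [coeff_principalSpecialization, coeff_prod]
  refine sum_congr rfl fun d hd => ?_
  rw [hf d (mdeg_of_mem_finsuppAntidiag hd), Finsupp.prod,
    prod_subset (mem_finsuppAntidiag.mp hd).2 fun i _ hi => by
      rw [Finsupp.notMem_support_iff.mp hi, ha0],
    map_prod, ← prod_mul_distrib]
  refine prod_congr rfl fun i _ => ?_
  rw [coeff_rescale, coeff_mk, ← pow_mul, mul_comm]

theorem principalSpecialization_hsym (j : ℕ) :
    principalSpecialization F n ζ (hsym F j) =
      C (coeff j (∏ i ∈ range n, rescale (ζ ^ i) (mk 1))) * X ^ j := by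
  ext m
  rw [coeff_C_mul_X_pow]
  split_ifs with hmj
  · subst hmj
    rw [coeff_principalSpecialization_of_coeff_eq_prod (a := 1) rfl fun d hd => ?_]
    · simp only [Pi.one_apply, map_one]
      rfl
    · simp [hsym, MvPowerSeries.coeff_apply, hd]
  · rw [coeff_principalSpecialization]
    refine sum_eq_zero fun d hd => ?_
    simp [hsym, MvPowerSeries.coeff_apply, mdeg_of_mem_finsuppAntidiag hd, hmj]

theorem principalSpecialization_hprod (μ : Multiset ℕ) :
    principalSpecialization F n ζ (hprod F μ) =
      C ((μ.map fun j => coeff j (∏ i ∈ range n, rescale (ζ ^ i) (mk 1))).prod) * X ^ μ.sum := by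
  induction μ using Multiset.induction with
  | empty => simp [hprod]
  | cons j μ ih =>
    rw [hprod, Multiset.map_cons, Multiset.prod_cons, map_mul, ← hprod, ih,
      principalSpecialization_hsym, Multiset.map_cons, Multiset.prod_cons, Multiset.sum_cons,
      map_mul, pow_add]
    ring

end PrincipalSpecialization

section PrimitiveRootSpecialization

variable {F L : Type*} [Field F] [Field L] [CharZero L] [Algebra F L] {n : ℕ} {ζ : L}

theorem coeff_principalSpecialization_hprod_parts (hζ : IsPrimitiveRoot ζ n) (hn : n ≠ 0)
    (l : n.Partition) :
    coeff n (principalSpecialization F n ζ (hprod F l.parts)) =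
      if l = Nat.Partition.indiscrete n then 1 else 0 := by
  have hval := fun {j : ℕ} (hj0 : 0 < j) (hjn : j ≤ n) =>
    coeff_prod_rescale_primitiveRoot hζ (a := 1) (b := 1) rfl
      (fun m _ => by simp) hj0 hjn
  rw [principalSpecialization_hprod, l.parts_sum, coeff_C_mul_X_pow, if_pos rfl]
  split_ifs with hl
  · subst hl
    rw [Nat.Partition.indiscrete_parts hn, Multiset.map_singleton, Multiset.prod_singleton,
      hval (Nat.pos_of_ne_zero hn) le_rfl, if_pos rfl, Pi.one_apply]
  · obtain ⟨j, hj, hjn⟩ := Nat.Partition.exists_mem_parts_lt_of_ne_indiscrete hn hl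
    refine Multiset.prod_eq_zero (Multiset.mem_map.mpr ⟨j, hj, ?_⟩)
    rw [hval (l.parts_pos hj) hjn.le, if_neg hjn.ne]

theorem coeff_principalSpecialization_sproutFn (hζ : IsPrimitiveRoot ζ n) (hn : n ≠ 0)
    {a b : ℕ → F} (ha0 : a 0 = 1)
    (hb : ∀ m : ℕ, 1 ≤ m → (m : F) * a m = ∑ k ∈ Icc 1 m, b k * a (m - k)) :
    coeff n (principalSpecialization F n ζ (sproutFn a n)) = algebraMap F L (b n) := by
  have hbL : ∀ m : ℕ, 1 ≤ m → (m : L) * algebraMap F L (a m)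
      = ∑ k ∈ Icc 1 m, algebraMap F L (b k) * algebraMap F L (a (m - k)) := fun m hm => by
    simpa using congrArg (algebraMap F L) (hb m hm)
  rw [coeff_principalSpecialization_of_coeff_eq_prod (f := sproutFn a n) ha0 fun d hd => by
      rw [MvPowerSeries.coeff_apply]; exact if_pos hd,
    coeff_prod_rescale_primitiveRoot hζ (by simp [ha0]) hbL (Nat.pos_of_ne_zero hn) le_rfl,
    if_pos rfl]

end PrimitiveRootSpecialization

/-- With `log F(t) = ∑ bₙ tⁿ/n`, the coefficient of `hₙ` in
the `h`-expansion of `Rₙ` equals `bₙ`. -/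
theorem statement12 (a b : ℕ → K) (ha0 : a 0 = 1)
    (hb : ∀ n : ℕ, 1 ≤ n → (n : K) * a n = ∑ k ∈ Finset.Icc 1 n, b k * a (n - k))
    (n : ℕ) (hn : 1 ≤ n) (c : Nat.Partition n → K)
    (hc : sproutFn a n = ∑ l : Nat.Partition n, c l • hprod K l.parts) :
    c (Nat.Partition.indiscrete n) = b n := by
  have hn0 : n ≠ 0 := by omega
  have : NeZero (n : AlgebraicClosure K) := ⟨Nat.cast_ne_zero.mpr hn0⟩
  obtain ⟨ζ, hζ⟩ := HasEnoughRootsOfUnity.exists_primitiveRoot (AlgebraicClosure K) n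
  have h := congrArg (fun f => coeff n (principalSpecialization K n ζ f)) hc
  simp only [map_sum, map_smul, coeff_smul, coeff_principalSpecialization_sproutFn hζ hn0 ha0 hb,
    coeff_principalSpecialization_hprod_parts hζ hn0, smul_ite, smul_zero, sum_ite_eq', mem_univ,
    if_true, ← Algebra.algebraMap_eq_smul_one] at h
  exact (algebraMap K _).injective h.symm

end
end

section
/- For any partition λ ⊢ n: the coefficient of e_1^n in the e-basis expansion of the monomial symmetric function m_λ is 1 if λ = (n) and 0 otherwise; and the coefficient of e_2 e_1^{n-2} is −n if λ = (n), 1 if λ = (n−1,1), and 0 otherwise. -/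
/- Symmetric functions in infinitely many variables `x₁, x₂, …` are modelled as
elements of `MvPowerSeries ℕ K`. A sprout sequence with seed
`F(t) = ∑ aₙ tⁿ` (`a₀ = 1`) is defined by `∑ₙ Rₙ tⁿ = ∏ᵢ F(xᵢ t)`; since `Rₙ` is
homogeneous of degree `n`, the variable `t` is recorded by the total degree, and
the product `∏ᵢ F(xᵢ t)` is the power series whose coefficient on the monomial
`∏ᵢ xᵢ^{dᵢ}` is `∏ᵢ a_{dᵢ}`. -/

open Finset

noncomputable section

variable {K : Type*} [Field K] [CharZero K]

/-- The partition `⟨2, 1^{n-2}⟩` of `n` (for `n ≥ 2`). -/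
def twoOnePartition (n : ℕ) (hn : 2 ≤ n) : Nat.Partition n :=
  ⟨2 ::ₘ Multiset.replicate (n - 2) 1, by
    intro k hk
    rcases Multiset.mem_cons.mp hk with h | h
    · omega
    · rw [Multiset.eq_of_mem_replicate h]; exact Nat.one_pos, by
      simp [Multiset.sum_replicate]; omega⟩


/- Specialise to the two variables `x₀, x₁` by setting `x₂ = x₃ = ⋯ = 0`. This is a ring
homomorphism (`MvPowerSeries.killCompl`), and it sends `e_k` to the elementary symmetric
polynomial `1, x₀ + x₁, x₀x₁, 0` for `k = 0, 1, 2, ≥ 3`. Hence `e_μ` becomes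
`(x₀ + x₁)ᵃ (x₀x₁)ᵇ` if `μ = 1ᵃ2ᵇ` and `0` otherwise. Comparing the coefficients of `x₀ⁿ` and
`x₀ⁿ⁻¹x₁` in `m_λ = ∑ c_μ e_μ` gives `c_{1ⁿ} = [λ = (n)]` and
`n c_{1ⁿ} + c_{21ⁿ⁻²} = [λ = (n-1, 1)]`. -/

namespace Finsupp

variable {σ : Type*}

theorem map_support_eq_replicate_one_iff (x : σ →₀ ℕ) (k : ℕ) :
    x.support.val.map x = Multiset.replicate k 1 ↔ (∀ i, x i ≤ 1) ∧ #x.support = k := by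
  rw [Multiset.eq_replicate, Multiset.card_map, Finset.card_val, and_comm]
  refine and_congr_left fun _ => ⟨fun h i => ?_, fun h b hb => ?_⟩
  · by_cases hi : i ∈ x.support
    · exact (h _ (Multiset.mem_map_of_mem _ hi)).le
    · simp [notMem_support_iff.mp hi]
  · obtain ⟨i, hi, rfl⟩ := Multiset.mem_map.mp hb
    have := mem_support_iff.mp hi
    have := h i
    omega

theorem map_support_single (a : σ) {m : ℕ} (hm : m ≠ 0) :
    (single a m).support.val.map (single a m) = {m} := by
  simp [support_single a hm]

theorem single_zero_add_single_one_inj {i j i' j' : ℕ} :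
    (single 0 i + single 1 j : Fin 2 →₀ ℕ) = single 0 i' + single 1 j' ↔ i = i' ∧ j = j' :=
  ⟨fun h => ⟨by simpa using DFunLike.congr_fun h 0, by simpa using DFunLike.congr_fun h 1⟩,
    by rintro ⟨rfl, rfl⟩; rfl⟩

theorem map_support_single_zero_add_single_one {i j : ℕ} (hi : i ≠ 0) (hj : j ≠ 0) :
    (single 0 i + single 1 j : Fin 2 →₀ ℕ).support.val.map
      (single 0 i + single 1 j : Fin 2 →₀ ℕ) = {i, j} := by
  have hsupp : (single 0 i + single 1 j : Fin 2 →₀ ℕ).support = univ :=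
    Finset.eq_univ_of_forall fun k => by fin_cases k <;> simp [hi, hj]
  rw [hsupp, Fin.univ_val_map]
  simp
  rfl

end Finsupp

theorem typeOf_embDomain {σ : Type*} (e : σ ↪ ℕ) (x : σ →₀ ℕ) :
    typeOf (x.embDomain e) = x.support.val.map x := by
  simp [typeOf, Finsupp.support_embDomain, Multiset.map_map]

namespace Nat.Partition

variable {n : ℕ} (μ : n.Partition)

theorem parts_eq_replicate_one_add_replicate_two (h : ∀ k ∈ μ.parts, k ≤ 2) :
    μ.parts = .replicate (μ.parts.count 1) 1 + .replicate (μ.parts.count 2) 2 := by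
  ext k
  simp only [Multiset.count_add, Multiset.count_replicate]
  rcases (by omega : k = 1 ∨ k = 2 ∨ k ≠ 1 ∧ k ≠ 2) with rfl | rfl | ⟨h1, h2⟩
  · simp
  · simp
  · rw [if_neg (Ne.symm h1), if_neg (Ne.symm h2), Multiset.count_eq_zero]
    intro hk
    have := μ.parts_pos hk
    have := h k hk
    omega

theorem count_one_add_two_mul_count_two (h : ∀ k ∈ μ.parts, k ≤ 2) :
    μ.parts.count 1 + 2 * μ.parts.count 2 = n := by
  conv_rhs => rw [← μ.parts_sum, μ.parts_eq_replicate_one_add_replicate_two h]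
  simp [Multiset.sum_replicate, mul_comm]

theorem eq_onePartition_iff (h : ∀ k ∈ μ.parts, k ≤ 2) :
    μ = onePartition n ↔ μ.parts.count 2 = 0 := by
  refine ⟨fun h1 => by simp [h1, onePartition, Multiset.count_replicate], fun h2 => ?_⟩
  have := μ.count_one_add_two_mul_count_two h
  apply Nat.Partition.ext
  rw [μ.parts_eq_replicate_one_add_replicate_two h, h2]
  simp [onePartition, ← this, h2]

theorem eq_twoOnePartition_iff (hn : 2 ≤ n) (h : ∀ k ∈ μ.parts, k ≤ 2) :
    μ = twoOnePartition n hn ↔ μ.parts.count 2 = 1 := by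
  refine ⟨fun h1 => by simp [h1, twoOnePartition, Multiset.count_replicate], fun h2 => ?_⟩
  have := μ.count_one_add_two_mul_count_two h
  apply Nat.Partition.ext
  rw [μ.parts_eq_replicate_one_add_replicate_two h, h2, add_comm, Multiset.replicate_one,
    Multiset.singleton_add]
  simp only [twoOnePartition]
  congr 2
  omega

end Nat.Partition

theorem onePartition_parts_le_two {n : ℕ} : ∀ k ∈ (onePartition n).parts, k ≤ 2 :=
  fun k hk => by simp [Multiset.eq_of_mem_replicate hk]

theorem twoOnePartition_parts_le_two {n : ℕ} (hn : 2 ≤ n) :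
    ∀ k ∈ (twoOnePartition n hn).parts, k ≤ 2 := by
  intro k hk
  simp only [twoOnePartition] at hk
  rcases Multiset.mem_cons.mp hk with rfl | hk
  · rfl
  · simp [Multiset.eq_of_mem_replicate hk]

namespace MvPolynomial

variable {R : Type*} [CommSemiring R]

theorem coeff_esymm {σ : Type*} [Fintype σ] [DecidableEq σ] (x : σ →₀ ℕ) (k : ℕ) :
    coeff x (esymm σ R k) = if (∀ i, x i ≤ 1) ∧ #x.support = k then 1 else 0 := by
  have indicator_apply (t : Finset σ) (j : σ) :
      (∑ i ∈ t, Finsupp.single i 1) j = if j ∈ t then 1 else 0 := by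
    simp [Finsupp.finsetSum_apply, Finsupp.single_apply]
  have indicator_eq_iff (t : Finset σ) :
      ∑ i ∈ t, Finsupp.single i 1 = x ↔ (∀ i, x i ≤ 1) ∧ t = x.support := by
    constructor
    · rintro rfl
      refine ⟨fun i => ?_, ?_⟩
      · rw [indicator_apply]; split_ifs <;> omega
      · ext j; simp [indicator_apply]
    · rintro ⟨hx, rfl⟩
      ext i
      have := hx i
      simp only [indicator_apply, Finsupp.mem_support_iff]
      split_ifs <;> omega
  simp_rw [esymm_eq_sum_monomial, coeff_sum, coeff_monomial, indicator_eq_iff, ite_and]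
  split_ifs <;> simp [Finset.sum_ite_eq', *]

theorem esymm_eq_zero_of_card_lt {σ : Type*} [Fintype σ] {k : ℕ} (hk : Fintype.card σ < k) :
    esymm σ R k = 0 := by
  simp [esymm, Finset.powersetCard_eq_empty.mpr hk]

theorem esymm_fin_two_two : esymm (Fin 2) R 2 = X 0 * X 1 := by
  rw [esymm, show powersetCard 2 (univ : Finset (Fin 2)) = {univ} from
    Finset.powersetCard_self univ, sum_singleton, Fin.prod_univ_two]

theorem coeff_X_add_X_pow (i j a : ℕ) :
    coeff (Finsupp.single 0 i + Finsupp.single 1 j) ((X 0 + X 1 : MvPolynomial (Fin 2) R) ^ a) =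
      if i + j = a then (a.choose i : R) else 0 := by
  have term (m : ℕ) : (X 0 ^ m * X 1 ^ (a - m) * (a.choose m : MvPolynomial (Fin 2) R)) =
      monomial (Finsupp.single 0 m + Finsupp.single 1 (a - m)) (a.choose m : R) := by
    rw [X_pow_eq_monomial, X_pow_eq_monomial, monomial_mul, ← map_natCast C, mul_comm,
      C_mul_monomial, mul_one, mul_one]
  simp_rw [add_pow, coeff_sum, term, coeff_monomial, Finsupp.single_zero_add_single_one_inj,
    ite_and, Finset.sum_ite_eq', Finset.mem_range, ← ite_and]
  exact if_congr (by omega) rfl rfl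

theorem coeff_X_add_X_pow_mul_X_mul_X_pow (i j a b : ℕ) :
    coeff (Finsupp.single 0 i + Finsupp.single 1 j)
        ((X 0 + X 1 : MvPolynomial (Fin 2) R) ^ a * (X 0 * X 1) ^ b) =
      if b ≤ i ∧ b ≤ j ∧ i + j = a + 2 * b then (a.choose (i - b) : R) else 0 := by
  have h_le : Finsupp.single 0 b + Finsupp.single 1 b ≤ Finsupp.single (0 : Fin 2) i +
      Finsupp.single 1 j ↔ b ≤ i ∧ b ≤ j := by
    simp [Finsupp.le_def, Fin.forall_fin_two]
  have h_sub : Finsupp.single (0 : Fin 2) i + Finsupp.single 1 j -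
      (Finsupp.single 0 b + Finsupp.single 1 b) =
        Finsupp.single 0 (i - b) + Finsupp.single 1 (j - b) := by
    ext k; fin_cases k <;> simp
  rw [mul_pow, X_pow_eq_monomial, X_pow_eq_monomial, monomial_mul, mul_one, coeff_mul_monomial',
    h_sub, coeff_X_add_X_pow, mul_one]
  by_cases hb : b ≤ i ∧ b ≤ j
  · rw [if_pos (h_le.mpr hb)]
    exact if_congr (by omega) rfl rfl
  · rw [if_neg (mt h_le.mp hb), if_neg (by tauto)]

variable {n : ℕ}

theorem esymmPart_fin_two (μ : n.Partition) :
    esymmPart (Fin 2) R μ = if ∀ k ∈ μ.parts, k ≤ 2 then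
      (X 0 + X 1) ^ μ.parts.count 1 * (X 0 * X 1) ^ μ.parts.count 2 else 0 := by
  split_ifs with h
  · conv_lhs => rw [esymmPart, μ.parts_eq_replicate_one_add_replicate_two h]
    simp [Multiset.map_replicate, esymm_fin_two_two]
  · push Not at h
    obtain ⟨k, hk, hk2⟩ := h
    exact Multiset.prod_eq_zero (Multiset.mem_map.mpr
      ⟨k, hk, esymm_eq_zero_of_card_lt (by simpa using hk2)⟩)

theorem coeff_single_esymmPart (μ : n.Partition) :
    coeff (Finsupp.single 0 n) (esymmPart (Fin 2) R μ) = if μ = onePartition n then 1 else 0 := by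
  by_cases h : ∀ k ∈ μ.parts, k ≤ 2
  · have hsum := μ.count_one_add_two_mul_count_two h
    rw [esymmPart_fin_two, if_pos h, ← add_zero (Finsupp.single 0 n), ← Finsupp.single_zero 1,
      coeff_X_add_X_pow_mul_X_mul_X_pow]
    simp only [μ.eq_onePartition_iff h]
    generalize μ.parts.count 1 = a at *
    generalize μ.parts.count 2 = b at *
    subst hsum
    rcases Nat.eq_zero_or_pos b with rfl | hb
    · simp
    · rw [if_neg (by omega), if_neg (by omega)]
  · rw [esymmPart_fin_two, if_neg h, coeff_zero, if_neg]
    rintro rfl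
    exact h onePartition_parts_le_two

theorem coeff_single_add_single_esymmPart (hn : 2 ≤ n) (μ : n.Partition) :
    coeff (Finsupp.single 0 (n - 1) + Finsupp.single 1 1) (esymmPart (Fin 2) R μ) =
      (if μ = onePartition n then (n : R) else 0) + if μ = twoOnePartition n hn then 1 else 0 := by
  by_cases h : ∀ k ∈ μ.parts, k ≤ 2
  · have hsum := μ.count_one_add_two_mul_count_two h
    rw [esymmPart_fin_two, if_pos h, coeff_X_add_X_pow_mul_X_mul_X_pow]
    simp only [μ.eq_onePartition_iff h, μ.eq_twoOnePartition_iff hn h]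
    generalize μ.parts.count 1 = a at *
    generalize μ.parts.count 2 = b at *
    subst hsum
    rcases b with _ | _ | b
    · rw [if_pos (by omega), show a + 2 * 0 - 1 - 0 = a - 1 by omega, Nat.choose_symm (by omega),
        Nat.choose_one_right]
      simp
    · simp
    · rw [if_neg (by omega), if_neg (by omega), if_neg (by omega), add_zero]
  · rw [esymmPart_fin_two, if_neg h, coeff_zero, if_neg, if_neg, add_zero]
    · rintro rfl
      exact h (twoOnePartition_parts_le_two hn)
    · rintro rfl
      exact h onePartition_parts_le_two

end MvPolynomial

section Restriction

open MvPowerSeries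

variable {σ F : Type*} [Field F] (e : σ ↪ ℕ)

theorem coeff_killCompl_msym (μ : Multiset ℕ) (x : σ →₀ ℕ) :
    coeff x (killCompl e (msym F μ)) = if x.support.val.map x = μ then 1 else 0 := by
  rw [coeff_killCompl, ← typeOf_embDomain]
  rfl

variable [Fintype σ]

theorem killCompl_esym (k : ℕ) :
    killCompl e (esym F k) = (MvPolynomial.esymm σ F k : MvPowerSeries σ F) := by
  classical
  ext x
  rw [MvPolynomial.coeff_coe, MvPolynomial.coeff_esymm, esym, coeff_killCompl_msym]
  exact if_congr (Finsupp.map_support_eq_replicate_one_iff x k) rfl rfl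

theorem killCompl_eprod {n : ℕ} (μ : n.Partition) :
    killCompl e (eprod F μ.parts) = (MvPolynomial.esymmPart σ F μ : MvPowerSeries σ F) := by
  rw [eprod, MvPolynomial.esymmPart, map_multiset_prod, Multiset.map_map,
    ← MvPolynomial.coeToMvPowerSeries.ringHom_apply, map_multiset_prod, Multiset.map_map]
  congr 1
  exact Multiset.map_congr rfl fun k _ => killCompl_esym e k

theorem sum_mul_coeff_esymmPart_of_msym_eq {n : ℕ} {μ : Multiset ℕ} {c : n.Partition → F}
    (h : msym F μ = ∑ ν : n.Partition, c ν • eprod F ν.parts) (x : σ →₀ ℕ) :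
    ∑ ν : n.Partition, c ν * MvPolynomial.coeff x (MvPolynomial.esymmPart σ F ν) =
      if x.support.val.map x = μ then 1 else 0 := by
  rw [← coeff_killCompl_msym ((Fintype.equivFin σ).toEmbedding.trans Fin.valEmbedding), h]
  simp [killCompl_eprod, MvPolynomial.coeff_coe]

end Restriction

section Coefficients

variable {F : Type*} [Field F] {n : ℕ} {l : n.Partition} {c : n.Partition → F}

theorem coeff_onePartition_of_msym_eq (hn : 0 < n)
    (h : msym F l.parts = ∑ μ : n.Partition, c μ • eprod F μ.parts) :
    c (onePartition n) = if l.parts = {n} then 1 else 0 := by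
  have := sum_mul_coeff_esymmPart_of_msym_eq h (Finsupp.single (0 : Fin 2) n)
  simp_rw [MvPolynomial.coeff_single_esymmPart, mul_ite, mul_one, mul_zero, Finset.sum_ite_eq',
    Finset.mem_univ, if_true, Finsupp.map_support_single _ hn.ne'] at this
  rw [this]
  exact if_congr eq_comm rfl rfl

theorem coeff_twoOnePartition_of_msym_eq (hn : 2 ≤ n)
    (h : msym F l.parts = ∑ μ : n.Partition, c μ • eprod F μ.parts) :
    c (twoOnePartition n hn) =
      if l.parts = {n} then -(n : F) else if l.parts = {n - 1, 1} then 1 else 0 := by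
  have := sum_mul_coeff_esymmPart_of_msym_eq h
    (Finsupp.single 0 (n - 1) + Finsupp.single 1 1 : Fin 2 →₀ ℕ)
  simp_rw [MvPolynomial.coeff_single_add_single_esymmPart hn, mul_add, mul_ite, mul_one, mul_zero,
    Finset.sum_add_distrib, Finset.sum_ite_eq', Finset.mem_univ, if_true,
    Finsupp.map_support_single_zero_add_single_one (by omega : n - 1 ≠ 0) one_ne_zero,
    coeff_onePartition_of_msym_eq (by omega) h] at this
  have hne : ({n - 1, 1} : Multiset ℕ) ≠ {n} := fun h => by simpa using congrArg Multiset.card h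
  by_cases h1 : l.parts = {n}
  · rw [if_pos h1, if_neg fun h2 => hne (h2.trans h1)] at this
    rw [if_pos h1]
    linear_combination this
  · rw [if_neg h1, zero_mul, zero_add] at this
    rw [if_neg h1, this]
    exact if_congr eq_comm rfl rfl

end Coefficients

/-- For `λ ⊢ n`: the coefficient of `e₁ⁿ` in the `e`-expansion
of `m_λ` is `1` if `λ = (n)` and `0` otherwise; and (for `n ≥ 2`) the
coefficient of `e₂e₁^{n-2}` is `-n` if `λ = (n)`, `1` if `λ = (n-1, 1)`, and `0`
otherwise. -/
theorem statement14 :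
    (∀ (n : ℕ), 0 < n → ∀ (l : Nat.Partition n) (c : Nat.Partition n → K),
      msym K l.parts = ∑ μ : Nat.Partition n, c μ • eprod K μ.parts →
        c (onePartition n) = if l.parts = {n} then 1 else 0) ∧
    (∀ (n : ℕ) (hn : 2 ≤ n), ∀ (l : Nat.Partition n) (c : Nat.Partition n → K),
      msym K l.parts = ∑ μ : Nat.Partition n, c μ • eprod K μ.parts →
        c (twoOnePartition n hn) =
          if l.parts = {n} then -(n : K)
          else if l.parts = {n - 1, 1} then 1 else 0) :=
  ⟨fun _ hn _ _ h => coeff_onePartition_of_msym_eq hn h,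
    fun _ hn _ _ h => coeff_twoOnePartition_of_msym_eq hn h⟩

end
end

section
/- The number of cyclically alternating permutations of [2n] — alternating permutations a_1 > a_2 < ⋯ < a_{2n} of [2n] that additionally satisfy a_{2n} < a_1 — equals n · E_{2n−1}, where E_{2n−1} is the number of alternating permutations of [2n−1]. -/
/-!
In a cyclically alternating permutation of `[2n]` the maximum sits at a peak, i.e. at an even
(zero-based) index `2k`, and rotating the word by an even amount preserves cyclic alternation.
Rotating the maximum to the front identifies these permutations with pairs `(k, u)`, `u` cyclically
alternating with `u 0` maximal. Deleting that leading maximum and complementing the remaining values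
turns `u` into an arbitrary alternating permutation of `[2n-1]`, and conversely.
-/

noncomputable section

/-- A permutation `w = a₁ a₂ ⋯ a_m` of `[m]` (zero-indexed) is *alternating* if
`a₁ > a₂ < a₃ > a₄ < ⋯`. -/
def IsAlt {m : ℕ} (w : Equiv.Perm (Fin m)) : Prop :=
  ∀ (i : ℕ) (h : i + 1 < m),
    if i % 2 = 0 then w ⟨i + 1, h⟩ < w ⟨i, Nat.lt_of_succ_lt h⟩
    else w ⟨i, Nat.lt_of_succ_lt h⟩ < w ⟨i + 1, h⟩

def eulerE (m : ℕ) : ℕ := Nat.card {w : Equiv.Perm (Fin m) // IsAlt w}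

open Equiv

def IsCycAlt {N : ℕ} [NeZero N] (w : Perm (Fin N)) : Prop :=
  ∀ i : Fin N, if i.val % 2 = 0 then w (i + 1) < w i else w i < w (i + 1)

theorem isAlt_iff_forall_fin {M : ℕ} (w : Perm (Fin (M + 1))) :
    IsAlt w ↔ ∀ j : Fin M,
      if j.val % 2 = 0 then w j.succ < w j.castSucc else w j.castSucc < w j.succ :=
  ⟨fun h j => h j j.succ.isLt, fun h i hi => h ⟨i, by omega⟩⟩

theorem isCycAlt_iff {m : ℕ} (w : Perm (Fin (2 * m + 2))) :
    IsCycAlt w ↔ IsAlt w ∧ w (Fin.last _) < w 0 := by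
  have hlast : (2 * m + 1) % 2 ≠ 0 := by omega
  rw [isAlt_iff_forall_fin, IsCycAlt, Fin.forall_fin_succ']
  simp only [Fin.coeSucc_eq_succ, Fin.last_add_one, Fin.val_last, Fin.val_castSucc, hlast,
    if_false]

theorem val_add_mod_two {m : ℕ} (a b : Fin (2 * m + 2)) :
    (a + b).val % 2 = (a.val + b.val) % 2 := by
  rw [Fin.val_add, Nat.mod_mod_of_dvd _ ⟨m + 1, by ring⟩]

theorem IsCycAlt.trans_addRight {m : ℕ} {w : Perm (Fin (2 * m + 2))} (hw : IsCycAlt w)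
    {p : Fin (2 * m + 2)} (hp : p.val % 2 = 0) : IsCycAlt ((Equiv.addRight p).trans w) := by
  intro i
  have hpar : (i + p).val % 2 = i.val % 2 := by rw [val_add_mod_two]; omega
  simpa only [Equiv.trans_apply, Equiv.coe_addRight, add_right_comm i 1 p, hpar] using hw (i + p)

theorem IsCycAlt.symm_last_mod_two {m : ℕ} {w : Perm (Fin (2 * m + 2))} (hw : IsCycAlt w) :
    (w.symm (Fin.last _)).val % 2 = 0 := by
  by_contra h
  have := hw (w.symm (Fin.last _))
  rw [if_neg h, Equiv.apply_symm_apply] at this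
  exact (Fin.le_last _).not_gt this

/-- The word `M, M-1-v(0), …, M-1-v(M-1)`: the maximum followed by the complement of `v`. -/
def prependMax {M : ℕ} (v : Perm (Fin M)) : Perm (Fin (M + 1)) :=
  (Perm.decomposeFin.symm (0, v)).trans Fin.revPerm

theorem prependMax_zero {M : ℕ} (v : Perm (Fin M)) : prependMax v 0 = Fin.last M := by
  simp [prependMax, Perm.decomposeFin_symm_apply_zero]

theorem prependMax_succ {M : ℕ} (v : Perm (Fin M)) (i : Fin M) :
    prependMax v i.succ = (v i).rev.castSucc := by
  simp [prependMax, Perm.decomposeFin_symm_apply_succ, Fin.rev_succ]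

theorem isAlt_prependMax_iff {K : ℕ} (v : Perm (Fin (K + 1))) :
    IsAlt (prependMax v) ↔ IsAlt v := by
  rw [isAlt_iff_forall_fin, isAlt_iff_forall_fin, Fin.forall_fin_succ]
  have h0 : prependMax v (0 : Fin (K + 1)).succ < prependMax v (0 : Fin (K + 1)).castSucc := by
    rw [Fin.castSucc_zero, prependMax_zero, prependMax_succ]
    exact Fin.castSucc_lt_last _
  refine (and_iff_right h0).trans (forall_congr' fun j => ?_)
  simp only [← Fin.succ_castSucc, prependMax_succ, Fin.castSucc_lt_castSucc_iff, Fin.rev_lt_rev,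
    Fin.val_succ]
  rcases Nat.mod_two_eq_zero_or_one j with h | h <;> simp [h, Nat.succ_mod_two_eq_zero_iff]

theorem prependMax_trans_revPerm {M : ℕ} (v : Perm (Fin M)) :
    (prependMax v).trans Fin.revPerm = Perm.decomposeFin.symm (0, v) := by
  ext i; simp [prependMax]

def prependMaxEquiv {M : ℕ} : Perm (Fin M) ≃ {u : Perm (Fin (M + 1)) // u 0 = Fin.last M} where
  toFun v := ⟨prependMax v, prependMax_zero v⟩
  invFun u := (Perm.decomposeFin (u.1.trans Fin.revPerm)).2
  left_inv v := by simp [prependMax_trans_revPerm]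
  right_inv := by
    rintro ⟨u, hu⟩
    apply Subtype.ext
    show prependMax (Perm.decomposeFin (u.trans Fin.revPerm)).2 = u
    generalize he : Perm.decomposeFin (u.trans Fin.revPerm) = e
    obtain ⟨p, v⟩ := e
    rw [← Equiv.eq_symm_apply] at he
    obtain rfl : p = 0 := by
      rw [← Perm.decomposeFin_symm_apply_zero p v, ← he]
      simp [hu]
    ext i
    simp [prependMax, ← he]

theorem isCycAlt_iff_isAlt_of_apply_zero {m : ℕ} {u : Perm (Fin (2 * m + 2))}
    (h0 : u 0 = Fin.last _) : IsCycAlt u ↔ IsAlt u := by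
  rw [isCycAlt_iff, h0, and_iff_left_iff_imp]
  refine fun _ => (Fin.le_last _).lt_of_ne fun h => ?_
  have := u.injective (h.trans h0.symm)
  simp [Fin.ext_iff] at this

def altEquivCycAltMaxAtZero (m : ℕ) :
    {v : Perm (Fin (2 * m + 1)) // IsAlt v} ≃
      {u : Perm (Fin (2 * m + 2)) // IsCycAlt u ∧ u 0 = Fin.last _} :=
  (prependMaxEquiv.subtypeEquiv fun v => (isAlt_prependMax_iff v).symm).trans <|
    (subtypeSubtypeEquivSubtypeInter (fun u => u 0 = Fin.last _) IsAlt).trans <|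
      subtypeEquivRight fun _ => and_comm.trans
        (and_congr_left isCycAlt_iff_isAlt_of_apply_zero).symm

def evenPos {m : ℕ} (k : Fin (m + 1)) : Fin (2 * m + 2) := ⟨2 * k, by omega⟩

def halfPos {m : ℕ} (p : Fin (2 * m + 2)) : Fin (m + 1) := ⟨p / 2, by omega⟩

theorem halfPos_evenPos {m : ℕ} (k : Fin (m + 1)) : halfPos (evenPos k) = k := by
  ext; simp [halfPos, evenPos]

theorem evenPos_halfPos {m : ℕ} {p : Fin (2 * m + 2)} (hp : p.val % 2 = 0) :
    evenPos (halfPos p) = p := by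
  ext; simp only [halfPos, evenPos]; omega

theorem val_evenPos_mod_two {m : ℕ} (k : Fin (m + 1)) : (evenPos k).val % 2 = 0 := by
  simp [evenPos]

theorem val_neg_mod_two {m : ℕ} (p : Fin (2 * m + 2)) : (-p).val % 2 = p.val % 2 := by
  have := val_add_mod_two (-p) p
  rw [neg_add_cancel, Fin.val_zero] at this
  omega

def cycAltEquivProdMaxAtZero (m : ℕ) :
    {w : Perm (Fin (2 * m + 2)) // IsCycAlt w} ≃
      Fin (m + 1) × {u : Perm (Fin (2 * m + 2)) // IsCycAlt u ∧ u 0 = Fin.last _} where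
  toFun w := (halfPos (w.1.symm (Fin.last _)),
    ⟨(Equiv.addRight (w.1.symm (Fin.last _))).trans w.1,
      w.2.trans_addRight w.2.symm_last_mod_two, by simp⟩)
  invFun ku := ⟨(Equiv.addRight (evenPos ku.1)).symm.trans ku.2.1, by
    rw [Equiv.addRight_symm]
    exact ku.2.2.1.trans_addRight (by rw [val_neg_mod_two, val_evenPos_mod_two])⟩
  left_inv := by
    rintro ⟨w, hw⟩
    ext i
    simp [evenPos_halfPos hw.symm_last_mod_two]
  right_inv := by
    rintro ⟨k, u, hu, hu0⟩
    have hu0' : u.symm (Fin.last _) = 0 := u.symm_apply_eq.2 hu0.symm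
    ext1
    · simp [hu0', halfPos_evenPos]
    · ext i; simp [hu0']

theorem card_isCycAlt (m : ℕ) :
    Nat.card {w : Perm (Fin (2 * m + 2)) // IsCycAlt w} = (m + 1) * eulerE (2 * m + 1) := by
  rw [Nat.card_congr (cycAltEquivProdMaxAtZero m), Nat.card_prod, Nat.card_fin,
    ← Nat.card_congr (altEquivCycAltMaxAtZero m)]
  rfl

/-- For `n ≥ 1`, the number of cyclically alternating
permutations of `[2n]` — alternating permutations `a₁ > a₂ < ⋯` of `[2n]` that
additionally satisfy `a_{2n} < a₁` — equals `n · E_{2n-1}`. -/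
theorem statement19 (n : ℕ) (hn : 0 < n) :
    Nat.card {w : Equiv.Perm (Fin (2 * n)) //
        IsAlt w ∧ w ⟨2 * n - 1, by omega⟩ < w ⟨0, by omega⟩} =
      n * eulerE (2 * n - 1) := by
  obtain ⟨m, rfl⟩ : ∃ m, n = m + 1 := ⟨n - 1, by omega⟩
  exact (Nat.card_congr (subtypeEquivRight fun w => (isCycAlt_iff w).symm)).trans (card_isCycAlt m)

end
end
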